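/- arXiv:2504.18002 — 3 statements merged into one kernel-verified Lean document; each statement's English description precedes it below -/
import Mathlib

section
/- Let m ≥ 1 and let v_1, ..., v_m be positive reals (subregion sizes) with total volume v_S = Σ v_i. For each value z in (y_*, y^*], let p_i(z) ∈ [0,1] with Σ_i p_i(z) = 1 be adaptive subregion probabilities, and let v_i(y) ∈ [0, v_i] be non-decreasing functions of y with v_i(y^*) = v_i (level-set sizes). Assume the monotone-ratio condition: for all y_* < y ≤ z ≤ y^* and all t, t' with y_* < t ≤ t' ≤ y^*, (Σ_i (p_i(t)/v_i) v_i(y)) / (Σ_i (p_i(t)/v_i) v_i(z)) ≥ (Σ_i (p_i(t')/v_i) v_i(y)) / (Σ_i (p_i(t')/v_i) v_i(z)). Suppose further that p_i(y^*) = v_i / v_S for each i. Then for all y, z with y_* < y < z ≤ y^*, Σ_i (p_i(z)/v_i) v_i(y) ≥ (v_S(y)/v_S(z)) · Σ_i (p_i(z)/v_i) v_i(z), where v_S(y) = Σ_i v_i(y). -/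
open Finset

/-- Key inequality in the proof of Theorem 1 of the BASSO paper: the one-step
transition probability of BASSO with uniform sampling within subregions dominates
that of hesitant adaptive search, under Assumption 1. -/
theorem stmt_1 (m : ℕ) (hm : 1 ≤ m) (ylo yhi : ℝ)
    (v : Fin m → ℝ) (hv : ∀ i, 0 < v i)
    (vl : Fin m → ℝ → ℝ)                -- level-set sizes v_i(y)
    (p : ℝ → Fin m → ℝ)                 -- adaptive subregion probabilities p_i(z)
    (hp0 : ∀ z, ylo < z → z ≤ yhi → ∀ i, 0 ≤ p z i)
    (hp1 : ∀ z, ylo < z → z ≤ yhi → ∀ i, p z i ≤ 1)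
    (hpsum : ∀ z, ylo < z → z ≤ yhi → ∑ i, p z i = 1)
    (hvl0 : ∀ i y, 0 ≤ vl i y) (hvlle : ∀ i y, vl i y ≤ v i)
    (hvlmono : ∀ i, Monotone (vl i))
    (hvltop : ∀ i, vl i yhi = v i)
    (hratio : ∀ y z t t', ylo < y → y ≤ z → z ≤ yhi → ylo < t → t ≤ t' → t' ≤ yhi →
      (∑ i, (p t i / v i) * vl i y) / (∑ i, (p t i / v i) * vl i z) ≥
      (∑ i, (p t' i / v i) * vl i y) / (∑ i, (p t' i / v i) * vl i z))
    (hpunif : ∀ i, p yhi i = v i / ∑ j, v j) :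
    ∀ y z, ylo < y → y < z → z ≤ yhi →
      ∑ i, (p z i / v i) * vl i y ≥
        ((∑ i, vl i y) / (∑ i, vl i z)) * ∑ i, (p z i / v i) * vl i z := by
  intro y z hy hyz hz
  have hne : (Finset.univ : Finset (Fin m)).Nonempty := by
    haveI : NeZero m := ⟨by omega⟩
    exact univ_nonempty
  have hvS : 0 < ∑ j, v j := Finset.sum_pos (fun i _ => hv i) hne
  have hz' : ylo < z := hy.trans hyz
  have hterm : ∀ (w : ℝ) (i : Fin m), 0 ≤ (p z i / v i) * vl i w := fun w i =>
    mul_nonneg (div_nonneg (hp0 z hz' hz i) (hv i).le) (hvl0 i w)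
  have hL0 : 0 ≤ ∑ i, (p z i / v i) * vl i y :=
    Finset.sum_nonneg fun i _ => hterm y i
  have hD0 : 0 ≤ ∑ i, (p z i / v i) * vl i z :=
    Finset.sum_nonneg fun i _ => hterm z i
  rcases hD0.eq_or_lt with hD | hD
  · rw [← hD, mul_zero]; exact hL0
  · have key := hratio y z z yhi hy hyz.le hz hz' hz le_rfl
    have hsimp : ∀ w : ℝ, ∑ i, (p yhi i / v i) * vl i w = (∑ i, vl i w) / ∑ j, v j := by
      intro w
      rw [Finset.sum_div]
      refine Finset.sum_congr rfl fun i _ => ?_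
      rw [hpunif i, div_right_comm, div_self (hv i).ne', one_div, inv_mul_eq_div]
    rw [hsimp y, hsimp z, div_div_div_comm, div_self hvS.ne', div_one] at key
    have := (le_div_iff₀ hD).mp key
    linarith
end

section
/- Let f: S → ℝ satisfy the Lipschitz condition with constant L on a compact convex set S ⊂ ℝ^d of diameter at most D, with unique minimizer x_* and minimum value y_*. Then for 0 < ε ≤ L·D, the ratio of the Lebesgue measure of S to the Lebesgue measure of the level set {x ∈ S : f(x) ≤ y_* + ε} is at most (L·D/ε)^d, hence ln(vol(S)/vol({x ∈ S : f(x) ≤ y_* + ε})) ≤ d · ln(L·D/ε). -/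
open MeasureTheory Set
open scoped ENNReal

/-- Lipschitz volume bound (Zabinsky–Smith), the geometric ingredient of
Corollary 1 of the BASSO paper: for an L-Lipschitz function on a compact convex
set of diameter at most D, the volume ratio between the domain and the ε-level
set at the minimum is at most (LD/ε)^d, hence its logarithm is at most
d·ln(LD/ε). -/
theorem stmt_7 (d : ℕ) (L D ε ystar : ℝ) (hL : 0 < L) (hD : 0 < D)
    (S : Set (EuclideanSpace ℝ (Fin d)))
    (hScpt : IsCompact S) (hSconv : Convex ℝ S) (hSvol : 0 < volume S)
    (hdiam : Metric.diam S ≤ D)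
    (f : EuclideanSpace ℝ (Fin d) → ℝ)
    (hLip : LipschitzOnWith (Real.toNNReal L) f S)
    (xstar : EuclideanSpace ℝ (Fin d)) (hxS : xstar ∈ S)
    (hfmin : f xstar = ystar) (hlb : ∀ x ∈ S, ystar ≤ f x)
    (huniq : ∀ x ∈ S, f x = ystar → x = xstar)
    (hε : 0 < ε) (hεLD : ε ≤ L * D) :
    volume S / volume {x ∈ S | f x ≤ ystar + ε} ≤ ENNReal.ofReal ((L * D / ε) ^ d)
    ∧ Real.log ((volume S).toReal / (volume {x ∈ S | f x ≤ ystar + ε}).toReal)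
      ≤ d * Real.log (L * D / ε) := by
  have hLD : 0 < L * D := mul_pos hL hD
  set c : ℝ := ε / (L * D) with hc_def
  have hc0 : 0 < c := div_pos hε hLD
  have hc1 : c ≤ 1 := (div_le_one hLD).2 hεLD
  set T : Set (EuclideanSpace ℝ (Fin d)) :=
    AffineMap.homothety xstar c '' S with hT_def
  -- T is contained in the level set
  have hsub : T ⊆ {x ∈ S | f x ≤ ystar + ε} := by
    rintro _ ⟨x, hx, rfl⟩
    have happ : AffineMap.homothety xstar c x = c • (x - xstar) + xstar := by
      simp [AffineMap.homothety_apply, vsub_eq_sub, vadd_eq_add]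
    have hyS : AffineMap.homothety xstar c x ∈ S := by
      have := hSconv hxS hx (by linarith : (0:ℝ) ≤ 1 - c) hc0.le (by ring)
      rw [happ]
      convert this using 1
      module
    refine ⟨hyS, ?_⟩
    have hdist : dist (AffineMap.homothety xstar c x) xstar ≤ c * D := by
      rw [happ]
      have : dist (c • (x - xstar) + xstar) xstar = |c| * dist x xstar := by
        rw [dist_eq_norm, dist_eq_norm]
        simp [add_sub_cancel_right, norm_smul, Real.norm_eq_abs]
      rw [this, abs_of_pos hc0]
      exact mul_le_mul_of_nonneg_left
        ((Metric.dist_le_diam_of_mem hScpt.isBounded hx hxS).trans hdiam) hc0.le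
    have hlip := hLip.dist_le_mul _ hyS _ hxS
    have hcoe : ((Real.toNNReal L : NNReal) : ℝ) = L := Real.coe_toNNReal _ hL.le
    rw [hcoe] at hlip
    have : f (AffineMap.homothety xstar c x) - ystar ≤ L * (c * D) := by
      have h1 : f (AffineMap.homothety xstar c x) - ystar
          ≤ |f (AffineMap.homothety xstar c x) - f xstar| := by
        rw [hfmin]; exact le_abs_self _
      calc f (AffineMap.homothety xstar c x) - ystar
          ≤ |f (AffineMap.homothety xstar c x) - f xstar| := h1
        _ = dist (f (AffineMap.homothety xstar c x)) (f xstar) := (Real.dist_eq _ _).symm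
        _ ≤ L * dist (AffineMap.homothety xstar c x) xstar := hlip
        _ ≤ L * (c * D) := mul_le_mul_of_nonneg_left hdist hL.le
    have hLcD : L * (c * D) = ε := by
      field_simp [hc_def]
      rw [hc_def]; field_simp
    linarith [this, hLcD ▸ this]
  -- volume of T
  have hvolT : volume T = ENNReal.ofReal (c ^ d) * volume S := by
    rw [hT_def, Measure.addHaar_image_homothety, finrank_euclideanSpace_fin,
      abs_of_pos (pow_pos hc0 d)]
  have hvolW : ENNReal.ofReal (c ^ d) * volume S ≤ volume {x ∈ S | f x ≤ ystar + ε} := by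
    rw [← hvolT]; exact measure_mono hsub
  have hSfin : volume S < ⊤ := hScpt.measure_lt_top
  have hWle : volume {x ∈ S | f x ≤ ystar + ε} ≤ volume S :=
    measure_mono (fun x hx => hx.1)
  have hWfin : volume {x ∈ S | f x ≤ ystar + ε} < ⊤ := lt_of_le_of_lt hWle hSfin
  have hWpos : 0 < volume {x ∈ S | f x ≤ ystar + ε} :=
    lt_of_lt_of_le (ENNReal.mul_pos (ENNReal.ofReal_pos.2 (pow_pos hc0 d)).ne' hSvol.ne').bot_lt hvolW
  have hinvc : (L * D / ε) = c⁻¹ := by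
    rw [hc_def]; field_simp
  -- the ENNReal bound
  have hmain : volume S ≤ ENNReal.ofReal ((L * D / ε) ^ d)
      * volume {x ∈ S | f x ≤ ystar + ε} := by
    have hkey : ENNReal.ofReal ((L * D / ε) ^ d) * ENNReal.ofReal (c ^ d) = 1 := by
      rw [← ENNReal.ofReal_mul (by positivity), hinvc]
      rw [← mul_pow, inv_mul_cancel₀ hc0.ne']
      simp
    calc volume S = 1 * volume S := (one_mul _).symm
      _ = ENNReal.ofReal ((L * D / ε) ^ d) * ENNReal.ofReal (c ^ d) * volume S := by
          rw [hkey]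
      _ = ENNReal.ofReal ((L * D / ε) ^ d) * (ENNReal.ofReal (c ^ d) * volume S) := by
          ring
      _ ≤ _ := mul_le_mul_right hvolW _
  refine ⟨ENNReal.div_le_of_le_mul hmain, ?_⟩
  -- real/log part
  set V := (volume S).toReal
  set W := (volume {x ∈ S | f x ≤ ystar + ε}).toReal
  have hVpos : 0 < V := ENNReal.toReal_pos hSvol.ne' hSfin.ne
  have hWr : c ^ d * V ≤ W := by
    have := ENNReal.toReal_mono hWfin.ne hvolW
    rwa [ENNReal.toReal_mul, ENNReal.toReal_ofReal (by positivity)] at this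
  have hWpos' : 0 < W := lt_of_lt_of_le (by positivity) hWr
  have hratio : V / W ≤ (L * D / ε) ^ d := by
    rw [div_le_iff₀ hWpos', hinvc]
    calc V = (c⁻¹ * c) ^ d * V := by rw [inv_mul_cancel₀ hc0.ne']; simp
      _ = (c⁻¹) ^ d * (c ^ d * V) := by rw [mul_pow]; ring
      _ ≤ (c⁻¹) ^ d * W := by
          exact mul_le_mul_of_nonneg_left hWr (by positivity)
  have hlog := Real.log_le_log (by positivity : (0:ℝ) < V / W) hratio
  rwa [Real.log_pow] at hlog
end

section
/- Pure Adaptive Search on the integer lattice S = {1,...,k}^d (uniform sampling over the strictly improving set at every step) reaches the global minimum value y_* in an expected number of iterations strictly less than 2 + d·ln(k). -/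
open MeasureTheory ProbabilityTheory Set
open scoped ENNReal

noncomputable def Hsum : ℕ → ℝ := fun n => ∑ i ∈ Finset.range n, (1:ℝ)/(i+1)

lemma Hsum_nonneg (n : ℕ) : 0 ≤ Hsum n :=
  Finset.sum_nonneg (by intros; positivity)

lemma Hsum_mono : Monotone Hsum := fun a b h =>
  Finset.sum_le_sum_of_subset_of_nonneg (Finset.range_subset_range.2 h) (by intros; positivity)

lemma Hsum_succ (n : ℕ) : Hsum (n+1) = Hsum n + 1/(n+1) := by
  simp [Hsum, Finset.sum_range_succ]

lemma Hsum_aux (n : ℕ) : ∑ i ∈ Finset.range n, Hsum i + n = n * Hsum n := by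
  induction n with
  | zero => simp [Hsum]
  | succ n ih =>
    rw [Finset.sum_range_succ, Hsum_succ]
    push_cast
    have h1 : ((n:ℝ)+1) ≠ 0 := by positivity
    field_simp
    nlinarith [ih]

section Main

variable {α : Type*} [Fintype α] [DecidableEq α]

noncomputable def mcard (f : α → ℝ) (z : α) : ℕ :=
  (Finset.univ.filter fun y => f y < f z).card

noncomputable def wt (f : α → ℝ) (xstar : α) (x : α) : ℝ :=
  if x = xstar then 0 else Hsum (mcard f x) + 1

noncomputable def qr (f : α → ℝ) (xstar : α) (z x : α) : ℝ :=
  if f x < f z then (1 : ℝ) / (mcard f z : ℝ)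
  else if z = xstar ∧ x = z then 1 else 0

lemma comb (f : α → ℝ) :
    ∀ (n : ℕ) (F : Finset α), F.card = n →
    (∀ y ∈ F, ∀ u, f u < f y → u ∈ F) →
    ∑ y ∈ F, Hsum (mcard f y) ≤ ∑ i ∈ Finset.range F.card, Hsum i := by
  intro n
  induction n with
  | zero =>
    intro F hF _
    rw [Finset.card_eq_zero.mp hF]; simp
  | succ n ih =>
    intro F hcard hdc
    have hne : F.Nonempty := by rw [← Finset.card_pos, hcard]; omega
    obtain ⟨y0, hy0F, hy0max⟩ := F.exists_max_image f hne
    set F' := F.erase y0 with hF'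
    have hcard' : F'.card = n := by
      rw [hF', Finset.card_erase_of_mem hy0F, hcard]; omega
    have hdc' : ∀ y ∈ F', ∀ u, f u < f y → u ∈ F' := by
      intro y hy u hu
      have hyF := Finset.mem_of_mem_erase hy
      refine Finset.mem_erase.2 ⟨?_, hdc y hyF u hu⟩
      rintro rfl
      exact absurd (lt_of_lt_of_le hu (hy0max y hyF)) (lt_irrefl _)
    have key : mcard f y0 ≤ n := by
      have hsub : (Finset.univ.filter fun u => f u < f y0) ⊆ F' := by
        intro u hu
        simp only [Finset.mem_filter] at hu
        refine Finset.mem_erase.2 ⟨?_, hdc y0 hy0F u hu.2⟩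
        rintro rfl; exact lt_irrefl _ hu.2
      calc mcard f y0 ≤ F'.card := Finset.card_le_card hsub
        _ = n := hcard'
    have hsplit := Finset.sum_erase_add F (fun y => Hsum (mcard f y)) hy0F
    rw [← hsplit, hcard, Finset.sum_range_succ]
    have h1 := ih F' hcard' hdc'
    rw [hcard'] at h1
    exact add_le_add h1 (Hsum_mono key)

variable (f : α → ℝ) (xstar : α) (hmin : ∀ x, x ≠ xstar → f xstar < f x)
include hmin

lemma not_lt_xstar (x : α) : ¬ f x < f xstar := by
  rcases eq_or_ne x xstar with rfl | h
  · exact lt_irrefl _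
  · exact not_lt.2 (hmin x h).le

lemma mcard_xstar : mcard f xstar = 0 := by
  rw [mcard, Finset.card_eq_zero, Finset.filter_eq_empty_iff]
  exact fun {x} _ => not_lt_xstar f xstar hmin x

omit hmin in
lemma wt_nonneg (x : α) : 0 ≤ wt f xstar x := by
  rw [wt]; split
  · exact le_refl _
  · have := Hsum_nonneg (mcard f x); linarith

lemma wt_eq (x : α) : wt f xstar x = (if x = xstar then (0:ℝ) else 1) + Hsum (mcard f x) := by
  rw [wt]; split
  · rename_i h; rw [h, mcard_xstar f xstar hmin]; simp [Hsum]
  · ring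

lemma sum_wt_le (F : Finset α)
    (hdc : ∀ y ∈ F, ∀ u, f u < f y → u ∈ F) :
    ∑ x ∈ F, wt f xstar x ≤ F.card * Hsum F.card := by
  have h1 : ∑ x ∈ F, wt f xstar x =
      ∑ x ∈ F, (if x = xstar then (0:ℝ) else 1) + ∑ x ∈ F, Hsum (mcard f x) := by
    rw [← Finset.sum_add_distrib]
    exact Finset.sum_congr rfl fun x _ => wt_eq f xstar hmin x
  have h2 : ∑ x ∈ F, (if x = xstar then (0:ℝ) else 1) ≤ F.card := by
    calc ∑ x ∈ F, (if x = xstar then (0:ℝ) else 1) ≤ ∑ x ∈ F, 1 :=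
          Finset.sum_le_sum fun x _ => by split <;> norm_num
      _ = F.card := by simp
  have h3 := comb f F.card F rfl hdc
  have h4 := Hsum_aux F.card
  rw [h1]
  linarith

lemma drift (z : α) :
    (if z = xstar then (0:ℝ) else 1) + ∑ x : α, qr f xstar z x * wt f xstar x
      ≤ wt f xstar z := by
  rcases eq_or_ne z xstar with heq | hz
  · have hsum0 : ∑ x : α, qr f xstar z x * wt f xstar x = 0 := by
      refine Finset.sum_eq_zero fun x _ => ?_
      rcases eq_or_ne x xstar with rfl | h
      · simp [wt]
      · simp [qr, heq, not_lt_xstar f xstar hmin x, h]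
    rw [hsum0, if_pos heq]
    simp [wt, heq]
  · set F := Finset.univ.filter fun y => f y < f z with hF
    have hm : mcard f z = F.card := rfl
    have hxstarF : xstar ∈ F := by
      rw [hF, Finset.mem_filter]
      exact ⟨Finset.mem_univ _, hmin z hz⟩
    have hm1 : 1 ≤ F.card := Finset.card_pos.2 ⟨xstar, hxstarF⟩
    have hmne : (F.card : ℝ) ≠ 0 := by positivity
    have hdc : ∀ y ∈ F, ∀ u, f u < f y → u ∈ F := by
      intro y hy u hu
      rw [hF, Finset.mem_filter] at hy ⊢
      exact ⟨Finset.mem_univ _, hu.trans hy.2⟩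
    have hsum : ∑ x : α, qr f xstar z x * wt f xstar x =
        (1 / (F.card : ℝ)) * ∑ x ∈ F, wt f xstar x := by
      rw [Finset.mul_sum, hF, Finset.sum_filter]
      refine Finset.sum_congr rfl fun x _ => ?_
      by_cases hlt : f x < f z
      · simp [qr, hlt, hm]; exact Or.inl rfl
      · simp [qr, hlt, hz]
    have hle := sum_wt_le f xstar hmin F hdc
    have h5 : (1 / (F.card : ℝ)) * ∑ x ∈ F, wt f xstar x ≤ Hsum F.card := by
      calc (1 / (F.card : ℝ)) * ∑ x ∈ F, wt f xstar x
          ≤ (1 / (F.card : ℝ)) * (F.card * Hsum F.card) := by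
            apply mul_le_mul_of_nonneg_left hle; positivity
        _ = Hsum F.card := by field_simp
    rw [hsum]
    have hwz : wt f xstar z = Hsum F.card + 1 := by rw [wt, if_neg hz, hm]
    rw [hwz, if_neg hz]
    linarith

noncomputable def qk (f : α → ℝ) (xstar : α) (z x : α) : ℝ≥0∞ :=
  if f x < f z then (1 : ℝ≥0∞) / ((Finset.univ.filter fun y => f y < f z).card : ℝ≥0∞)
  else if z = xstar ∧ x = z then 1 else 0

omit hmin in
lemma qk_ne_top (z x : α) : qk f xstar z x ≠ ⊤ := by
  rw [qk]
  split_ifs with h1 h2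
  · refine (ENNReal.div_lt_top ENNReal.one_ne_top ?_).ne
    simp only [ne_eq, Nat.cast_eq_zero, Finset.card_eq_zero]
    intro he
    have : x ∈ Finset.univ.filter fun y => f y < f z :=
      Finset.mem_filter.2 ⟨Finset.mem_univ _, h1⟩
    simp [he] at this
  · exact ENNReal.one_ne_top
  · exact ENNReal.zero_ne_top

omit hmin in
lemma qk_toReal (z x : α) : (qk f xstar z x).toReal = qr f xstar z x := by
  rw [qk, qr, mcard]
  split_ifs with h1 h2 <;> simp

variable {Ω : Type*} [MeasurableSpace Ω] (μ : Measure Ω) [IsProbabilityMeasure μ]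

omit hmin in
lemma step_ennreal (X : ℕ → Ω → α)
    (hstep : ∀ n (z x : α), μ {ω | X n ω = z} ≠ 0 →
      (μ[|{ω | X n ω = z}]) {ω | X (n + 1) ω = x} = qk f xstar z x)
    (n : ℕ) (x : α) :
    μ {ω | X (n+1) ω = x} ≤ ∑ z : α, μ {ω | X n ω = z} * qk f xstar z x := by
  have hcover : {ω | X (n+1) ω = x} ⊆
      ⋃ z ∈ (Finset.univ : Finset α), ({ω | X (n+1) ω = x} ∩ {ω | X n ω = z}) := by
    intro ω hω
    exact Set.mem_biUnion (Finset.mem_univ (X n ω)) ⟨hω, rfl⟩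
  refine (measure_mono hcover).trans ((measure_biUnion_finset_le _ _).trans ?_)
  refine Finset.sum_le_sum fun z _ => ?_
  by_cases hz : μ {ω | X n ω = z} = 0
  · have h1 : μ ({ω | X (n+1) ω = x} ∩ {ω | X n ω = z}) ≤ μ {ω | X n ω = z} :=
      measure_mono Set.inter_subset_right
    simp only [hz, nonpos_iff_eq_zero] at h1
    simp [h1]
  · have h1 : μ ({ω | X (n+1) ω = x} ∩ {ω | X n ω = z}) ≤
        (μ.restrict {ω | X n ω = z}) {ω | X (n+1) ω = x} :=
      Measure.le_restrict_apply _ _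
    have h2 : (μ.restrict {ω | X n ω = z}) {ω | X (n+1) ω = x} =
        μ {ω | X n ω = z} * (μ[|{ω | X n ω = z}]) {ω | X (n+1) ω = x} := by
      rw [ProbabilityTheory.cond, Measure.smul_apply, smul_eq_mul, ← mul_assoc,
        ENNReal.mul_inv_cancel hz (measure_ne_top μ _), one_mul]
    rw [h2, hstep n z x hz] at h1
    exact h1

omit hmin in
lemma step_real (X : ℕ → Ω → α)
    (hstep : ∀ n (z x : α), μ {ω | X n ω = z} ≠ 0 →
      (μ[|{ω | X n ω = z}]) {ω | X (n + 1) ω = x} = qk f xstar z x)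
    (n : ℕ) (x : α) :
    (μ {ω | X (n+1) ω = x}).toReal ≤
      ∑ z : α, (μ {ω | X n ω = z}).toReal * qr f xstar z x := by
  have h := step_ennreal f xstar μ X hstep n x
  have hterm : ∀ z ∈ (Finset.univ : Finset α),
      μ {ω | X n ω = z} * qk f xstar z x ≠ ⊤ := fun z _ =>
    ENNReal.mul_ne_top (measure_ne_top μ _) (qk_ne_top f xstar z x)
  have hne : (∑ z : α, μ {ω | X n ω = z} * qk f xstar z x) ≠ ⊤ := by
    rw [ne_eq, ENNReal.sum_eq_top]
    push_neg
    exact fun z hz => hterm z hz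
  calc (μ {ω | X (n+1) ω = x}).toReal
      ≤ (∑ z : α, μ {ω | X n ω = z} * qk f xstar z x).toReal :=
        ENNReal.toReal_mono hne h
    _ = ∑ z : α, (μ {ω | X n ω = z}).toReal * qr f xstar z x := by
        rw [ENNReal.toReal_sum hterm]
        exact Finset.sum_congr rfl fun z _ => by
          rw [ENNReal.toReal_mul, qk_toReal]

lemma main_bound [Nonempty α] (X : ℕ → Ω → α)
    (h0 : ∀ x, μ {ω | X 0 ω = x} = 1 / (Fintype.card α : ℝ≥0∞))
    (hstep : ∀ n (z x : α), μ {ω | X n ω = z} ≠ 0 →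
      (μ[|{ω | X n ω = z}]) {ω | X (n + 1) ω = x} = qk f xstar z x) :
    ∑' n : ℕ, (μ {ω | X n ω ≠ xstar}).toReal ≤ Hsum (Fintype.card α) := by
  set N := Fintype.card α with hN
  have hN1 : 1 ≤ N := Fintype.card_pos
  have hNne : (N : ℝ) ≠ 0 := by positivity
  set p : ℕ → α → ℝ := fun n x => (μ {ω | X n ω = x}).toReal with hp
  set a : ℕ → ℝ := fun n => ∑ x : α, p n x * wt f xstar x with ha
  set t : ℕ → ℝ := fun n => ∑ x : α, p n x * (if x = xstar then (0:ℝ) else 1) with ht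
  have hpnonneg : ∀ n x, 0 ≤ p n x := fun n x => ENNReal.toReal_nonneg
  have hanonneg : ∀ n, 0 ≤ a n := fun n =>
    Finset.sum_nonneg fun x _ => mul_nonneg (hpnonneg n x) (wt_nonneg f xstar x)
  -- one-step supermartingale inequality
  have hTS : ∀ n, t n + a (n+1) ≤ a n := by
    intro n
    have h1 : a (n+1) ≤ ∑ x : α, (∑ z : α, p n z * qr f xstar z x) * wt f xstar x := by
      refine Finset.sum_le_sum fun x _ => ?_
      exact mul_le_mul_of_nonneg_right (step_real f xstar μ X hstep n x)
        (wt_nonneg f xstar x)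
    have h2 : ∑ x : α, (∑ z : α, p n z * qr f xstar z x) * wt f xstar x
        = ∑ z : α, p n z * (∑ x : α, qr f xstar z x * wt f xstar x) := by
      simp_rw [Finset.sum_mul, Finset.mul_sum]
      rw [Finset.sum_comm]
      exact Finset.sum_congr rfl fun z _ => Finset.sum_congr rfl fun x _ => by ring
    have h3 : t n + ∑ z : α, p n z * (∑ x : α, qr f xstar z x * wt f xstar x) ≤ a n := by
      rw [ht, ← Finset.sum_add_distrib]
      refine Finset.sum_le_sum fun z _ => ?_
      rw [← mul_add]
      exact mul_le_mul_of_nonneg_left (drift f xstar hmin z) (hpnonneg n z)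
    calc t n + a (n+1) ≤ t n + ∑ x : α, (∑ z : α, p n z * qr f xstar z x) * wt f xstar x :=
          by linarith
      _ = t n + ∑ z : α, p n z * (∑ x : α, qr f xstar z x * wt f xstar x) := by rw [h2]
      _ ≤ a n := h3
  -- telescoping
  have htel : ∀ M, ∑ n ∈ Finset.range M, t n + a M ≤ a 0 := by
    intro M
    induction M with
    | zero => simp
    | succ M ih =>
      rw [Finset.sum_range_succ, add_assoc]
      calc ∑ n ∈ Finset.range M, t n + (t M + a (M+1))
          ≤ ∑ n ∈ Finset.range M, t n + a M := by
            have := hTS M; linarith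
        _ ≤ a 0 := ih
  -- tail probability bounded by t n
  have hr : ∀ n, (μ {ω | X n ω ≠ xstar}).toReal ≤ t n := by
    intro n
    have hcover : {ω | X n ω ≠ xstar} ⊆
        ⋃ z ∈ Finset.univ.erase xstar, {ω | X n ω = z} := by
      intro ω hω
      exact Set.mem_biUnion (Finset.mem_erase.2 ⟨hω, Finset.mem_univ _⟩) rfl
    have h1 : μ {ω | X n ω ≠ xstar} ≤ ∑ z ∈ Finset.univ.erase xstar, μ {ω | X n ω = z} :=
      (measure_mono hcover).trans (measure_biUnion_finset_le _ _)
    have hne : (∑ z ∈ Finset.univ.erase xstar, μ {ω | X n ω = z}) ≠ ⊤ := by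
      rw [ne_eq, ENNReal.sum_eq_top]
      push_neg
      exact fun z _ => measure_ne_top μ _
    have h2 : (μ {ω | X n ω ≠ xstar}).toReal ≤ ∑ z ∈ Finset.univ.erase xstar, p n z := by
      calc (μ {ω | X n ω ≠ xstar}).toReal
          ≤ (∑ z ∈ Finset.univ.erase xstar, μ {ω | X n ω = z}).toReal :=
            ENNReal.toReal_mono hne h1
        _ = ∑ z ∈ Finset.univ.erase xstar, p n z :=
            ENNReal.toReal_sum fun z _ => measure_ne_top μ _
    have h3 : ∑ z ∈ Finset.univ.erase xstar, p n z = t n := by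
      simp only [ht]
      rw [← Finset.sum_erase_add _ _ (Finset.mem_univ xstar)]
      simp only [eq_self_iff_true, if_true, if_pos, mul_zero, add_zero]
      exact Finset.sum_congr rfl fun z hz => by
        rw [if_neg (Finset.mem_erase.1 hz).1, mul_one]
    linarith
  -- initial potential
  have ha0 : a 0 ≤ Hsum N := by
    have hp0 : ∀ x, p 0 x = 1 / (N : ℝ) := by
      intro x
      rw [hp]
      simp only [h0 x]
      rw [ENNReal.toReal_div, ENNReal.toReal_one, ENNReal.toReal_natCast]
    have hcardu : (Finset.univ : Finset α).card = N := Finset.card_univ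
    have hsw := sum_wt_le f xstar hmin (Finset.univ : Finset α)
      (fun y _ u _ => Finset.mem_univ u)
    rw [hcardu] at hsw
    have : a 0 = (1 / (N : ℝ)) * ∑ x : α, wt f xstar x := by
      rw [ha, Finset.mul_sum]
      exact Finset.sum_congr rfl fun x _ => by rw [hp0 x]
    rw [this]
    calc (1 / (N : ℝ)) * ∑ x : α, wt f xstar x
        ≤ (1 / (N : ℝ)) * (N * Hsum N) := by
          apply mul_le_mul_of_nonneg_left hsw; positivity
      _ = Hsum N := by field_simp
  -- conclude
  refine Real.tsum_le_of_sum_range_le (fun n => ENNReal.toReal_nonneg) fun M => ?_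
  calc ∑ n ∈ Finset.range M, (μ {ω | X n ω ≠ xstar}).toReal
      ≤ ∑ n ∈ Finset.range M, t n := Finset.sum_le_sum fun n _ => hr n
    _ ≤ a 0 := by have := htel M; have := hanonneg M; linarith
    _ ≤ Hsum N := ha0

end Main

lemma Hsum_le_log (n : ℕ) : Hsum n ≤ 1 + Real.log n := by
  have h : Hsum n = ((harmonic n : ℚ) : ℝ) := by
    rw [harmonic]; push_cast; simp [Hsum, one_div]
  rw [h]
  exact harmonic_le_one_add_log n

/-- Pure Adaptive Search on the integer lattice {1,…,k}^d (encoded as `Fin d → Fin k`):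
`X 0` is uniform on the lattice and, conditionally on `X n = z`, `X (n+1)` is uniform
on the strictly improving set {x : f x < f z} (the process is absorbed at the unique
global minimizer `xstar`).  The expected number of iterations to reach the global
minimum, written as the sum of the tail probabilities `P(X n ≠ xstar)`, is strictly
less than `2 + d·ln k`. -/
theorem stmt_9 (d k : ℕ) (hd : 1 ≤ d) (hk : 1 ≤ k)
    {Ω : Type*} [MeasurableSpace Ω] (μ : Measure Ω) [IsProbabilityMeasure μ]
    (f : (Fin d → Fin k) → ℝ) (xstar : Fin d → Fin k)
    (hmin : ∀ x, x ≠ xstar → f xstar < f x)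
    (X : ℕ → Ω → (Fin d → Fin k))
    (h0 : ∀ x, μ {ω | X 0 ω = x} = 1 / (k ^ d : ℝ≥0∞))
    (hstep : ∀ n (z x : Fin d → Fin k), μ {ω | X n ω = z} ≠ 0 →
      (μ[|{ω | X n ω = z}]) {ω | X (n + 1) ω = x} =
        if f x < f z then
          (1 : ℝ≥0∞) / ((Finset.univ.filter fun y => f y < f z).card : ℝ≥0∞)
        else if z = xstar ∧ x = z then 1 else 0) :
    (∑' n : ℕ, (μ {ω | X n ω ≠ xstar}).toReal) < 2 + (d : ℝ) * Real.log k := by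
  have hk0 : 0 < k := hk
  haveI : Nonempty (Fin d → Fin k) := ⟨fun _ => ⟨0, hk0⟩⟩
  have hcard : Fintype.card (Fin d → Fin k) = k ^ d := by
    simp [Fintype.card_fun]
  have h0' : ∀ x, μ {ω | X 0 ω = x} = 1 / (Fintype.card (Fin d → Fin k) : ℝ≥0∞) := by
    intro x
    rw [h0 x, hcard]
    push_cast
    rfl
  have hstep' : ∀ n (z x : Fin d → Fin k), μ {ω | X n ω = z} ≠ 0 →
      (μ[|{ω | X n ω = z}]) {ω | X (n + 1) ω = x} = qk f xstar z x := by
    intro n z x hz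
    rw [qk]
    exact hstep n z x hz
  have hb := main_bound f xstar hmin μ X h0' hstep'
  have hlog : Hsum (Fintype.card (Fin d → Fin k)) ≤ 1 + (d : ℝ) * Real.log k := by
    rw [hcard]
    have := Hsum_le_log (k ^ d)
    rw [Nat.cast_pow, Real.log_pow] at this
    exact this
  have hpos : (0:ℝ) ≤ (d : ℝ) * Real.log k := by
    apply mul_nonneg (by positivity)
    exact Real.log_nonneg (by exact_mod_cast hk)
  calc (∑' n : ℕ, (μ {ω | X n ω ≠ xstar}).toReal)
      ≤ Hsum (Fintype.card (Fin d → Fin k)) := hb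
    _ ≤ 1 + (d : ℝ) * Real.log k := hlog
    _ < 2 + (d : ℝ) * Real.log k := by linarith
end
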